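/- Structural floor of ECE under thresholded labels: suppose in some bin b every sample index i ∈ S_b satisfies p̂ᵢ = p*ᵢ, and hard labels are yᵢ = 1[p*ᵢ > τ]. If S_b contains exactly two samples with soft labels τ−ε and τ+ε (0 < ε < min(τ, 1−τ)), then the bin's calibration gap |p̂_b − ȳ_b^hard| = |τ − 1/2|, which is strictly positive whenever τ ≠ 1/2. -/
import Mathlib

/-- Structural floor of ECE under thresholded labels: in a bin with exactly two
samples whose (matched) predictions/soft labels are `τ - ε` and `τ + ε`, the gap
between the mean prediction and the mean hard label `1[p* > τ]` is `|τ - 1/2|`,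
strictly positive whenever `τ ≠ 1/2`. -/
theorem ece_structural_floor_two_sample (τ ε : ℝ)
    (hτ0 : 0 < τ) (hτ1 : τ < 1) (hε : 0 < ε) (hεlt : ε < min τ (1 - τ)) :
    |((τ - ε) + (τ + ε)) / 2 -
        ((if τ - ε > τ then (1 : ℝ) else 0) + (if τ + ε > τ then (1 : ℝ) else 0)) / 2|
      = |τ - 1 / 2| ∧
    (τ ≠ 1 / 2 → 0 < |τ - 1 / 2|) := by
  constructor
  · rw [if_neg (by linarith), if_pos (by linarith)]
    ring_nf
  · intro h
    exact abs_pos.mpr (sub_ne_zero.mpr h)
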